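/- For γ = −1, the family of vector fields on ℝ² given by L_n = e^{−nt+(n−1)x}[e^{2x} − (n+1)γe^{x} + (1/2)n(n+1)γ²](e^{x}−γ)^{−n−1} ∂_t + e^{−nt+(n−1)x}[n e^{x} − (1/2)n(n+1)γ](e^{x}−γ)^{−n} ∂_x, i.e. L_n = e^{−nt+(n−1)x}[e^{2x} + (n+1)e^{x} + n(n+1)/2](e^{x}+1)^{−n−1} ∂_t + e^{−nt+(n−1)x}[n e^{x} + n(n+1)/2](e^{x}+1)^{−n} ∂_x (n ∈ ℤ), is a realization of the Witt algebra: [L_m, L_n] = (m−n)L_{m+n} for all m, n ∈ ℤ. (This is the realization 𝔚₃ of Theorem 1 with γ = −1, for which the coefficients are smooth on all of ℝ².) -/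

import Mathlib

/-- Lie bracket of smooth vector fields on `ℝ²` (coordinates `(t,x)`), identified with
`C^∞` maps `ℝ² → ℝ²`: `[X,Y](p) = (DY)(p)(X(p)) - (DX)(p)(Y(p))`. -/
noncomputable def lieBracket2 (X Y : ℝ × ℝ → ℝ × ℝ) : ℝ × ℝ → ℝ × ℝ :=
  fun p => fderiv ℝ Y p (X p) - fderiv ℝ X p (Y p)

/-- The realization `𝔚₃` with `γ = -1`:
`L_n = e^{-nt+(n-1)x}[e^{2x} + (n+1)e^x + n(n+1)/2](e^x+1)^{-n-1} ∂_t
     + e^{-nt+(n-1)x}[n e^x + n(n+1)/2](e^x+1)^{-n} ∂_x`. -/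
noncomputable def W3field (n : ℤ) : ℝ × ℝ → ℝ × ℝ := fun p =>
  (Real.exp (-(n : ℝ) * p.1 + ((n : ℝ) - 1) * p.2) *
     (Real.exp (2 * p.2) + ((n : ℝ) + 1) * Real.exp p.2 + (n : ℝ) * ((n : ℝ) + 1) / 2) *
     (Real.exp p.2 + 1) ^ (-n - 1),
   Real.exp (-(n : ℝ) * p.1 + ((n : ℝ) - 1) * p.2) *
     ((n : ℝ) * Real.exp p.2 + (n : ℝ) * ((n : ℝ) + 1) / 2) *
     (Real.exp p.2 + 1) ^ (-n))

/-! With `φ = -t + x - log (eˣ + 1)`, `b_n = n + n(n+1)/2 · e⁻ˣ` and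
`V_n = (1 + b_n / (eˣ + 1)) ∂_t + b_n ∂_x`, one has `L_n = e^{nφ} V_n` and `dφ(V_n) = -1` for
every `n`. The Leibniz rule then gives `[L_m, L_n] = e^{(m+n)φ} ([V_m, V_n] + m V_m - n V_n)`.
Since the `V_n` depend on `x` alone, `[V_m, V_n]` is a one-variable computation, and it equals
`(m - n) V_{m+n} - m V_m + n V_n`. -/

open VectorField

section

variable {E : Type*} [NormedAddCommGroup E] [NormedSpace ℝ E]

lemma lieBracket_exp_mul_smul {φ : E → ℝ} {V W : E → E} {x : E} {a b : ℝ} (m n : ℝ)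
    (hφ : DifferentiableAt ℝ φ x) (hV : DifferentiableAt ℝ V x) (hW : DifferentiableAt ℝ W x)
    (hφV : fderiv ℝ φ x (V x) = a) (hφW : fderiv ℝ φ x (W x) = b) :
    lieBracket ℝ (fun y ↦ Real.exp (m * φ y) • V y) (fun y ↦ Real.exp (n * φ y) • W y) x =
      Real.exp ((m + n) * φ x) • (lieBracket ℝ V W x + (n * a) • W x - (m * b) • V x) := by
  have hm := (hφ.hasFDerivAt.const_mul m).exp
  have hn := (hφ.hasFDerivAt.const_mul n).exp
  rw [lieBracket_smul_left hm.differentiableAt hV, lieBracket_smul_right hn.differentiableAt hW,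
    hm.fderiv, hn.fderiv]
  simp only [smul_apply, map_smul, hφV, hφW, smul_eq_mul, add_mul, Real.exp_add, smul_add,
    smul_sub, smul_smul]
  module

lemma fderiv_comp_snd_apply {F : ℝ → E × ℝ} {F' : E × ℝ} {p : E × ℝ}
    (hF : HasDerivAt F F' p.2) (v : E × ℝ) :
    fderiv ℝ (fun q : E × ℝ ↦ F q.2) p v = v.2 • F' := by
  have h : HasFDerivAt (fun q : E × ℝ ↦ F q.2) _ p := hF.hasFDerivAt.comp p hasFDerivAt_snd
  simp [h.fderiv]

lemma lieBracket_comp_snd {F G : ℝ → E × ℝ} {F' G' : E × ℝ} {p : E × ℝ}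
    (hF : HasDerivAt F F' p.2) (hG : HasDerivAt G G' p.2) :
    lieBracket ℝ (fun q ↦ F q.2) (fun q ↦ G q.2) p = (F p.2).2 • G' - (G p.2).2 • F' := by
  rw [lieBracket, fderiv_comp_snd_apply hF, fderiv_comp_snd_apply hG]

end

noncomputable def W3phase (p : ℝ × ℝ) : ℝ := -p.1 + (p.2 - Real.log (Real.exp p.2 + 1))

noncomputable def W3coeff (n x : ℝ) : ℝ := n + n * (n + 1) / 2 * Real.exp (-x)

noncomputable def W3frame (n x : ℝ) : ℝ × ℝ := (1 + W3coeff n x / (Real.exp x + 1), W3coeff n x)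

lemma W3field_eq_exp_smul_W3frame (n : ℤ) :
    W3field n = fun p ↦ Real.exp (n * W3phase p) • W3frame n p.2 := by
  funext ⟨t, x⟩
  have hs : Real.exp x + 1 ≠ 0 := by positivity
  have hzpow : (Real.exp x + 1) ^ (-n) = Real.exp (-n * Real.log (Real.exp x + 1)) := by
    rw [← Real.rpow_intCast, Real.rpow_def_of_pos (by positivity)]
    push_cast; ring_nf
  have hexp : Real.exp (n * W3phase (t, x)) =
      Real.exp (-(n : ℝ) * t + ((n : ℝ) - 1) * x) * Real.exp x * (Real.exp x + 1) ^ (-n) := by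
    rw [hzpow, W3phase, ← Real.exp_add, ← Real.exp_add]; ring_nf
  have hsq : Real.exp (2 * x) = Real.exp x ^ 2 := by rw [← Real.exp_nat_mul]; norm_num
  simp only [W3field, W3frame, W3coeff, hexp, hsq, Real.exp_neg, zpow_sub_one₀ hs,
    Prod.smul_mk, smul_eq_mul]
  congr 1
  · field_simp; ring
  · field_simp

lemma hasFDerivAt_W3phase (p : ℝ × ℝ) :
    HasFDerivAt W3phase
      (-ContinuousLinearMap.fst ℝ ℝ ℝ + (Real.exp p.2 + 1)⁻¹ • ContinuousLinearMap.snd ℝ ℝ ℝ) p := by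
  have hs : Real.exp p.2 + 1 ≠ 0 := by positivity
  have hlog : HasDerivAt (fun x ↦ x - Real.log (Real.exp x + 1)) (Real.exp p.2 + 1)⁻¹ p.2 := by
    refine ((hasDerivAt_id p.2).sub (((Real.hasDerivAt_exp p.2).add_const 1).log hs)).congr_deriv ?_
    field_simp; ring
  exact hasFDerivAt_fst.neg.add (hlog.comp_hasFDerivAt p hasFDerivAt_snd)

lemma fderiv_W3phase_W3frame (n : ℝ) (p : ℝ × ℝ) :
    fderiv ℝ W3phase p (W3frame n p.2) = -1 := by
  have hs : Real.exp p.2 + 1 ≠ 0 := by positivity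
  rw [(hasFDerivAt_W3phase p).fderiv]
  simp only [W3frame, add_apply, neg_apply, smul_apply, ContinuousLinearMap.coe_fst',
    ContinuousLinearMap.coe_snd', smul_eq_mul]
  field_simp; ring

lemma hasDerivAt_W3coeff (n x : ℝ) :
    HasDerivAt (W3coeff n) (-(n * (n + 1) / 2 * Real.exp (-x))) x :=
  ((((Real.hasDerivAt_exp (-x)).comp x (hasDerivAt_neg x)).const_mul (n * (n + 1) / 2)).const_add
    n).congr_deriv (by ring)

lemma hasDerivAt_W3frame (n x : ℝ) :
    HasDerivAt (W3frame n)
      (-(n * (n + 1) / 2 * Real.exp (-x)) / (Real.exp x + 1)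
          - W3coeff n x * Real.exp x / (Real.exp x + 1) ^ 2,
        -(n * (n + 1) / 2 * Real.exp (-x))) x := by
  have hs : Real.exp x + 1 ≠ 0 := by positivity
  have hquot := (hasDerivAt_W3coeff n x).div ((Real.hasDerivAt_exp x).add_const 1) hs
  refine ((hquot.const_add 1).prodMk (hasDerivAt_W3coeff n x)).congr_deriv ?_
  congr 1
  field_simp

lemma differentiableAt_W3frame_comp_snd (n : ℝ) (p : ℝ × ℝ) :
    DifferentiableAt ℝ (fun q : ℝ × ℝ ↦ W3frame n q.2) p :=
  (hasDerivAt_W3frame n p.2).differentiableAt.comp p differentiableAt_snd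

lemma lieBracket_W3frame (m n : ℝ) (p : ℝ × ℝ) :
    lieBracket ℝ (fun q ↦ W3frame m q.2) (fun q ↦ W3frame n q.2) p =
      (m - n) • W3frame (m + n) p.2 - m • W3frame m p.2 + n • W3frame n p.2 := by
  have hs : Real.exp p.2 + 1 ≠ 0 := by positivity
  rw [lieBracket_comp_snd (hasDerivAt_W3frame m p.2) (hasDerivAt_W3frame n p.2)]
  simp only [W3frame, W3coeff, Real.exp_neg, Prod.smul_mk, Prod.mk_sub_mk, Prod.mk_add_mk,
    smul_eq_mul]
  congr 1 <;> · field_simp; ring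

theorem W3_realization :
    ∀ m n : ℤ, lieBracket2 (W3field m) (W3field n)
      = fun p => ((m : ℝ) - (n : ℝ)) • W3field (m + n) p := by
  intro m n
  funext p
  rw [show lieBracket2 = lieBracket ℝ from rfl, W3field_eq_exp_smul_W3frame,
    W3field_eq_exp_smul_W3frame, W3field_eq_exp_smul_W3frame,
    lieBracket_exp_mul_smul m n (hasFDerivAt_W3phase p).differentiableAt
      (differentiableAt_W3frame_comp_snd m p) (differentiableAt_W3frame_comp_snd n p)
      (fderiv_W3phase_W3frame m p) (fderiv_W3phase_W3frame n p),
    lieBracket_W3frame]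
  push_cast
  module
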